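/- Let G be a digraph and let B be a bramble in G. Then there exists a directed path P in G intersecting every member of B. -/

import Mathlib

variable {V : Type}

/-- `w` is a directed walk of length `n` in the digraph with edge relation `R`. -/
def IsWalkOn (R : V → V → Prop) (w : ℕ → V) (n : ℕ) : Prop :=
  ∀ i < n, R (w i) (w (i + 1))

/-- The set of vertices used by the walk `w` of length `n`. -/
def walkVerts (w : ℕ → V) (n : ℕ) : Set V :=
  {v | ∃ i ≤ n, w i = v}

/-- The set of directed edges used by the walk `w` of length `n`. -/
def walkEdges (w : ℕ → V) (n : ℕ) : Set (V × V) :=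
  {e | ∃ i < n, w i = e.1 ∧ w (i + 1) = e.2}

/-- A directed path: a walk with no repeated vertices. -/
def IsPathOn (R : V → V → Prop) (w : ℕ → V) (n : ℕ) : Prop :=
  IsWalkOn R w n ∧ ∀ i ≤ n, ∀ j ≤ n, w i = w j → i = j

/-- A directed cycle of length `n`: a closed walk with no repeated vertices
except that the last vertex equals the first. -/
def IsCycleOn (R : V → V → Prop) (w : ℕ → V) (n : ℕ) : Prop :=
  0 < n ∧ IsWalkOn R w n ∧ w n = w 0 ∧ ∀ i < n, ∀ j < n, w i = w j → i = j

/-- `v` is reachable from `u` by a directed walk all of whose vertices lie in `S`. -/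
def ReachIn (R : V → V → Prop) (S : Set V) (u v : V) : Prop :=
  ∃ w n, IsWalkOn R w n ∧ w 0 = u ∧ w n = v ∧ ∀ i ≤ n, w i ∈ S

/-- Every two vertices of `C` are mutually reachable inside `S`. -/
def StrongIn (R : V → V → Prop) (S C : Set V) : Prop :=
  ∀ u ∈ C, ∀ v ∈ C, ReachIn R S u v

/-- `C` is a strongly connected component of the subgraph induced on `S`. -/
def IsSCCOf (R : V → V → Prop) (S C : Set V) : Prop :=
  C.Nonempty ∧ C ⊆ S ∧ StrongIn R S C ∧
    ∀ C', C ⊆ C' → C' ⊆ S → StrongIn R S C' → C' = C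

/-- A directed `X`-walk: endpoints in `X`, all internal vertices outside `X`. -/
def IsXWalk (R : V → V → Prop) (X : Set V) (w : ℕ → V) (n : ℕ) : Prop :=
  IsWalkOn R w n ∧ w 0 ∈ X ∧ w n ∈ X ∧ ∀ i, 0 < i → i < n → w i ∉ X

/-- `S` meets every directed odd cycle. -/
def HitsOdd (R : V → V → Prop) (S : Set V) : Prop :=
  ∀ c m, IsCycleOn R c m → Odd m → ∃ i < m, c i ∈ S

/-- `S` meets every directed odd cycle of the subgraph induced on `W`. -/
def HitsOddIn (R : V → V → Prop) (S W : Set V) : Prop :=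
  ∀ c m, IsCycleOn R c m → Odd m → walkVerts c m ⊆ W → ∃ i < m, c i ∈ S

/-- A half-integral packing of `k` directed odd cycles: every vertex lies in at most
two of the `k` cycles. -/
def HalfPackOdd (R : V → V → Prop) (k : ℕ) : Prop :=
  ∃ (c : Fin k → ℕ → V) (len : Fin k → ℕ),
    (∀ i, IsCycleOn R (c i) (len i) ∧ Odd (len i)) ∧
    ∀ v, {i | v ∈ walkVerts (c i) (len i)}.ncard ≤ 2

/-- A linkage of order `s` from `A` to `B` avoiding `Z`: `s` pairwise vertex-disjoint
directed paths from `A` to `B`, none of which meets `Z`. -/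
def ExLinkage (R : V → V → Prop) (A B Z : Set V) (s : ℕ) : Prop :=
  ∃ (P : Fin s → ℕ → V) (len : Fin s → ℕ),
    (∀ i, IsPathOn R (P i) (len i) ∧ P i 0 ∈ A ∧ P i (len i) ∈ B ∧
      Disjoint (walkVerts (P i) (len i)) Z) ∧
    ∀ i j, i ≠ j → Disjoint (walkVerts (P i) (len i)) (walkVerts (P j) (len j))

/-- `T` is `r`-well-linked: for all disjoint equal-size subsets `A, B ⊆ T` of size at
least `r`, there are linkages of order `|A|` from `A` to `B` and from `B` to `A` in
`G - (T \ (A ∪ B))`. -/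
def WellLinked (R : V → V → Prop) (T : Finset V) (r : ℕ) : Prop :=
  ∀ A B : Finset V, A ⊆ T → B ⊆ T → Disjoint A B → A.card = B.card → r ≤ A.card →
    ExLinkage R (↑A) (↑B) ((↑T : Set V) \ (↑A ∪ ↑B)) A.card ∧
    ExLinkage R (↑B) (↑A) ((↑T : Set V) \ (↑A ∪ ↑B)) A.card

/-- `S` is `k`-linked: for every vertex set `X` with `|X| < k`, there is a unique
strongly connected component of `G - X` containing more than half of the vertices
of `S`. -/
def KLinked (R : V → V → Prop) (S : Finset V) (k : ℕ) : Prop :=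
  ∀ X : Finset V, X.card < k →
    ∃! C : Set V, IsSCCOf R ((↑X : Set V)ᶜ) C ∧ S.card < 2 * ((↑S : Set V) ∩ C).ncard

/-- A bramble: a family of (vertex sets of) strongly connected subgraphs which
pairwise either intersect or are joined by edges in both directions. -/
def IsBramble (R : V → V → Prop) (B : Set (Set V)) : Prop :=
  (∀ C ∈ B, C.Nonempty ∧ StrongIn R C C) ∧
  ∀ C₁ ∈ B, ∀ C₂ ∈ B, (C₁ ∩ C₂).Nonempty ∨
    ((∃ u ∈ C₁, ∃ v ∈ C₂, R u v) ∧ (∃ u ∈ C₂, ∃ v ∈ C₁, R u v))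

/-- A walk in the underlying undirected graph of the digraph with edge relation `R`. -/
def IsUWalkOn (R : V → V → Prop) (w : ℕ → V) (n : ℕ) : Prop :=
  ∀ i < n, R (w i) (w (i + 1)) ∨ R (w (i + 1)) (w i)

/-- A separation `(C, D)` of a digraph: `C ∪ D = V` and there is no edge from
`C \ D` to `D \ C`. -/
def IsSeparation (R : V → V → Prop) (C D : Set V) : Prop :=
  C ∪ D = Set.univ ∧ ∀ u ∈ C \ D, ∀ v ∈ D \ C, ¬ R u v

/-!
Induct over the finite subfamilies `F` of the bramble. Given a path meeting every member of `F`
and a member `C` it misses, cut the path back to its shortest prefix still meeting all of `F`: its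
last vertex `v` lies in a member `D` that the prefix meets nowhere else. Since `D` is strongly
connected and either meets `C` or sends an edge into it, some path inside `D ∪ C` leads from `v`
into `C`; it meets the prefix only in `v`, so the concatenation is a path meeting `F` and `C`.
-/

section Walks

variable {R : V → V → Prop}

lemma isPathOn_const (v : V) : IsPathOn R (fun _ => v) 0 :=
  ⟨fun _ hi => absurd hi (Nat.not_lt_zero _), fun _ hi _ hj _ => by omega⟩

lemma IsPathOn.mono {w : ℕ → V} {n m : ℕ} (h : IsPathOn R w n) (hmn : m ≤ n) :
    IsPathOn R w m :=
  ⟨fun i hi => h.1 i (by omega), fun i hi j hj => h.2 i (by omega) j (by omega)⟩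

/-- `q 0` is skipped: it is meant to coincide with `w n`. -/
def walkAppend (w : ℕ → V) (n : ℕ) (q : ℕ → V) : ℕ → V :=
  fun k => if k ≤ n then w k else q (k - n)

lemma walkAppend_of_le {w q : ℕ → V} {n k : ℕ} (hk : k ≤ n) : walkAppend w n q k = w k :=
  if_pos hk

lemma walkAppend_of_ge {w q : ℕ → V} {n k : ℕ} (h0 : q 0 = w n) (hk : n ≤ k) :
    walkAppend w n q k = q (k - n) := by
  rcases hk.eq_or_lt with rfl | hlt
  · rw [walkAppend_of_le le_rfl, Nat.sub_self, h0]
  · exact if_neg (by omega)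

lemma IsWalkOn.append {w q : ℕ → V} {n m : ℕ} (hw : IsWalkOn R w n) (hq : IsWalkOn R q m)
    (h0 : q 0 = w n) : IsWalkOn R (walkAppend w n q) (n + m) := by
  intro k hk
  rcases lt_or_ge k n with hkn | hkn
  · rw [walkAppend_of_le hkn.le, walkAppend_of_le hkn]
    exact hw k hkn
  · rw [walkAppend_of_ge h0 hkn, walkAppend_of_ge h0 (by omega),
      show k + 1 - n = k - n + 1 by omega]
    exact hq (k - n) (by omega)

lemma IsPathOn.append {w q : ℕ → V} {n m : ℕ} (hw : IsPathOn R w n) (hq : IsPathOn R q m)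
    (h0 : q 0 = w n) (hmeet : ∀ i ≤ n, ∀ j ≤ m, w i = q j → j = 0) :
    IsPathOn R (walkAppend w n q) (n + m) := by
  refine ⟨hw.1.append hq.1 h0, ?_⟩
  have hcross : ∀ i ≤ n, ∀ j, n ≤ j → j ≤ n + m →
      walkAppend w n q i = walkAppend w n q j → i = j := by
    intro i hi j hj hjm heq
    rw [walkAppend_of_le hi, walkAppend_of_ge h0 hj] at heq
    have hj0 := hmeet i hi (j - n) (by omega) heq
    rw [hj0, h0] at heq
    have := hw.2 i hi n le_rfl heq
    omega
  intro i hi j hj heq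
  rcases le_total i n with hin | hni <;> rcases le_total j n with hjn | hnj
  · rw [walkAppend_of_le hin, walkAppend_of_le hjn] at heq
    exact hw.2 i hin j hjn heq
  · exact hcross i hin j hnj hj heq
  · exact (hcross j hjn i hni hi heq.symm).symm
  · rw [walkAppend_of_ge h0 hni, walkAppend_of_ge h0 hnj] at heq
    have := hq.2 (i - n) (by omega) (j - n) (by omega) heq
    omega

lemma IsWalkOn.shortcut {w : ℕ → V} {n a b : ℕ} (hw : IsWalkOn R w n) (hab : a < b)
    (hbn : b ≤ n) (heq : w a = w b) :
    IsWalkOn R (fun k => if k ≤ a then w k else w (k + (b - a))) (n - (b - a)) := by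
  intro k hk
  rcases lt_trichotomy k a with hka | rfl | hka
  · simp only [if_pos hka.le, if_pos (show k + 1 ≤ a by omega)]
    exact hw k (by omega)
  · simp only [le_refl, if_true, if_neg (show ¬ k + 1 ≤ k by omega),
      show k + 1 + (b - k) = b + 1 by omega, heq]
    exact hw b (by omega)
  · simp only [if_neg (show ¬ k ≤ a by omega), if_neg (show ¬ k + 1 ≤ a by omega),
      show k + 1 + (b - a) = k + (b - a) + 1 by omega]
    exact hw _ (by omega)

lemma ReachIn.mono {S T : Set V} {u v : V} (h : ReachIn R S u v) (hST : S ⊆ T) :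
    ReachIn R T u v :=
  let ⟨w, n, hw, h0, hn, hS⟩ := h
  ⟨w, n, hw, h0, hn, fun i hi => hST (hS i hi)⟩

lemma ReachIn.trans {S : Set V} {u v x : V} (huv : ReachIn R S u v) (hvx : ReachIn R S v x) :
    ReachIn R S u x := by
  obtain ⟨w, n, hw, hw0, hwn, hwS⟩ := huv
  obtain ⟨q, m, hq, hq0, hqm, hqS⟩ := hvx
  have h0 : q 0 = w n := hq0.trans hwn.symm
  refine ⟨walkAppend w n q, n + m, hw.append hq h0, walkAppend_of_le (Nat.zero_le n) ▸ hw0,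
    ?_, fun i hi => ?_⟩
  · rw [walkAppend_of_ge h0 (by omega), Nat.add_sub_cancel_left, hqm]
  · rcases le_total i n with hin | hni
    · rw [walkAppend_of_le hin]; exact hwS i hin
    · rw [walkAppend_of_ge h0 hni]; exact hqS _ (by omega)

lemma reachIn_of_rel {S : Set V} {u v : V} (huv : R u v) (hu : u ∈ S) (hv : v ∈ S) :
    ReachIn R S u v :=
  ⟨fun k => if k = 0 then u else v, 1, fun i hi => by simpa [show i = 0 by omega] using huv,
    rfl, rfl, fun i _ => by by_cases hi : i = 0 <;> simp [hi, hu, hv]⟩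

/-- A shortest walk is a path. -/
lemma ReachIn.exists_isPathOn {S : Set V} {u v : V} (h : ReachIn R S u v) :
    ∃ q m, IsPathOn R q m ∧ q 0 = u ∧ q m = v ∧ ∀ i ≤ m, q i ∈ S := by
  classical
  have hex : ∃ n, ∃ w, IsWalkOn R w n ∧ w 0 = u ∧ w n = v ∧ ∀ i ≤ n, w i ∈ S :=
    let ⟨w, n, hw⟩ := h; ⟨n, w, hw⟩
  obtain ⟨w, hw, hw0, hwn, hwS⟩ := Nat.find_spec hex
  refine ⟨w, Nat.find hex, ⟨hw, ?_⟩, hw0, hwn, hwS⟩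
  suffices ∀ a b, a < b → b ≤ Nat.find hex → w a ≠ w b by
    intro i hi j hj heq
    by_contra hij
    rcases Nat.lt_or_gt_of_ne hij with hlt | hlt
    exacts [this i j hlt hj heq, this j i hlt hi heq.symm]
  intro a b hab hb heq
  refine Nat.find_min hex (m := Nat.find hex - (b - a)) (by omega)
    ⟨_, hw.shortcut hab hb heq, by simpa using hw0, ?_, fun k hk => ?_⟩
  · split_ifs with hm
    · rwa [show Nat.find hex - (b - a) = a by omega, heq, show b = Nat.find hex by omega]
    · rwa [show Nat.find hex - (b - a) + (b - a) = Nat.find hex by omega]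
  · split_ifs
    exacts [hwS k (by omega), hwS _ (by omega)]

end Walks

section Bramble

variable {R : V → V → Prop}

lemma IsBramble.exists_reachIn_union {B : Set (Set V)} (hB : IsBramble R B) {C D : Set V}
    (hD : D ∈ B) (hC : C ∈ B) {u : V} (hu : u ∈ D) :
    ∃ x ∈ C, ReachIn R (D ∪ C) u x := by
  rcases hB.2 D hD C hC with ⟨z, hzD, hzC⟩ | ⟨⟨y, hyD, x, hxC, hyx⟩, -⟩
  · exact ⟨z, hzC, ((hB.1 D hD).2 u hu z hzD).mono Set.subset_union_left⟩
  · exact ⟨x, hxC, ((hB.1 D hD).2 u hu y hyD).mono Set.subset_union_left |>.trans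
      (reachIn_of_rel hyx (Or.inl hyD) (Or.inr hxC))⟩

/-- The shortest prefix of `w` still meeting every member of `F` does. -/
lemma exists_shortest_prefix_meeting {w : ℕ → V} {n : ℕ} {F : Set (Set V)} (hF : F.Nonempty)
    (hw : ∀ C ∈ F, ∃ i ≤ n, w i ∈ C) :
    ∃ m ≤ n, (∀ C ∈ F, ∃ i ≤ m, w i ∈ C) ∧
      ∃ D ∈ F, w m ∈ D ∧ ∀ i ≤ m, w i ∈ D → i = m := by
  classical
  have hex : ∃ m, ∀ C ∈ F, ∃ i ≤ m, w i ∈ C := ⟨n, hw⟩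
  refine ⟨Nat.find hex, Nat.find_min' hex hw, Nat.find_spec hex, ?_⟩
  by_contra! hlast
  have hearlier : ∀ C ∈ F, ∃ i < Nat.find hex, w i ∈ C := by
    intro C hC
    obtain ⟨i, hi, hwi⟩ := Nat.find_spec hex C hC
    rcases hi.lt_or_eq with hlt | rfl
    · exact ⟨i, hlt, hwi⟩
    · obtain ⟨j, hj, hwj, hji⟩ := hlast C hC hwi
      exact ⟨j, lt_of_le_of_ne hj hji, hwj⟩
  obtain ⟨C, hC⟩ := hF
  have hpos : 0 < Nat.find hex := by
    obtain ⟨i, hi, -⟩ := hearlier C hC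
    omega
  exact Nat.find_min hex (m := Nat.find hex - 1) (by omega) fun C hC =>
    let ⟨i, hi, hwi⟩ := hearlier C hC; ⟨i, by omega, hwi⟩

lemma IsBramble.exists_isPathOn_insert {B F : Set (Set V)} (hB : IsBramble R B) (hFB : F ⊆ B)
    {C : Set V} (hC : C ∈ B) {w : ℕ → V} {n : ℕ} (hw : IsPathOn R w n)
    (hwF : ∀ D ∈ F, ∃ i ≤ n, w i ∈ D) :
    ∃ (w' : ℕ → V) (n' : ℕ), IsPathOn R w' n' ∧
      ∀ D ∈ insert C F, ∃ i ≤ n', w' i ∈ D := by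
  by_cases hwC : ∃ i ≤ n, w i ∈ C
  · exact ⟨w, n, hw, Set.forall_mem_insert.2 ⟨hwC, hwF⟩⟩
  push Not at hwC
  rcases F.eq_empty_or_nonempty with rfl | hF
  · obtain ⟨v, hv⟩ := (hB.1 C hC).1
    exact ⟨fun _ => v, 0, isPathOn_const v, by simpa using hv⟩
  obtain ⟨m, hmn, hmF, D, hDF, hwD, hDlast⟩ := exists_shortest_prefix_meeting hF hwF
  obtain ⟨x, hxC, hreach⟩ := hB.exists_reachIn_union (hFB hDF) hC hwD
  obtain ⟨q, k, hq, hq0, hqk, hqDC⟩ := hreach.exists_isPathOn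
  have hmeet : ∀ i ≤ m, ∀ j ≤ k, w i = q j → j = 0 := by
    intro i hi j hj heq
    rcases hqDC j hj with hqD | hqC
    · rw [← heq] at hqD
      rw [hDlast i hi hqD, ← hq0] at heq
      exact hq.2 j hj 0 (Nat.zero_le k) heq.symm
    · exact absurd (heq ▸ hqC) (hwC i (by omega))
  refine ⟨walkAppend w m q, m + k, (hw.mono hmn).append hq hq0 hmeet, ?_⟩
  refine Set.forall_mem_insert.2 ⟨⟨m + k, le_rfl, ?_⟩, fun D hD => ?_⟩
  · rwa [walkAppend_of_ge hq0 (by omega), Nat.add_sub_cancel_left, hqk]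
  · obtain ⟨i, hi, hwi⟩ := hmF D hD
    exact ⟨i, by omega, (walkAppend_of_le hi).symm ▸ hwi⟩

end Bramble

/-- In a (finite) digraph, for every bramble B there is a directed path
intersecting every member of B. -/
theorem bramble_hitting_path [Fintype V] [Nonempty V] (R : V → V → Prop)
    (B : Set (Set V)) (hB : IsBramble R B) :
    ∃ (w : ℕ → V) (n : ℕ), IsPathOn R w n ∧ ∀ C ∈ B, ∃ i ≤ n, w i ∈ C := by
  refine Set.Finite.induction_on_subset
    (motive := fun F _ =>
      ∃ (w : ℕ → V) (n : ℕ), IsPathOn R w n ∧ ∀ C ∈ F, ∃ i ≤ n, w i ∈ C)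
    B B.toFinite ?_ ?_
  · obtain ⟨v⟩ := ‹Nonempty V›
    exact ⟨fun _ => v, 0, isPathOn_const v, by simp⟩
  · rintro C F hC hFB - ⟨w, n, hw, hwF⟩
    exact hB.exists_isPathOn_insert hFB hC hw hwF
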